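/- arXiv:1607.00300 — 2 statements merged into one kernel-verified Lean document; each statement's English description precedes it below -/
import Mathlib

section
/- Let n = W ⊕ z be a finite-dimensional 2-step nilpotent Lie algebra over a field k of characteristic zero (z the center, W a linear complement) which is of TST type and satisfies (Λ²n)^n = Λ²z. Then every Lie bialgebra structure δ on n satisfies δ(z) ⊆ Λ²z and δ(W) ⊆ W∧z ⊕ Λ²z. -/
/-!
For central `z` the cocycle identity gives `x · δ(z) = 0` for all `x`, so `δ(z)` is an
antisymmetric invariant and lies in `Λ²z`. For `v ∈ W` let `S_v : W* → W` be the contraction of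
the `W ⊗ W`-component of `δ(v)`; it is antisymmetric. Since `[a, b]` is central, `δ[a, b] ∈ z ⊗ z`,
and pairing the cocycle identity for `δ[a, b]` with the `l`-th coordinate of `z` in the first
factor gives `S_b (T_l a) = S_a (T_l b)`. Together with the antisymmetry of `S_v` and of the `T_i`
this forces `T_i S_v T_l + T_l S_v T_i = 0`, so `S_v = 0` by the TST hypothesis: `δ(v)` has no
`W ⊗ W`-component.
-/

open TensorProduct

/-- The adjoint action of a Lie algebra `g` on `g ⊗ g`, determined by
`x · (a ⊗ b) = ⁅x,a⁆ ⊗ b + a ⊗ ⁅x,b⁆`. -/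
noncomputable def tAct (k g : Type*) [CommRing k] [LieRing g] [LieAlgebra k g] (x : g) :
    g ⊗[k] g →ₗ[k] g ⊗[k] g :=
  TensorProduct.map (LieAlgebra.ad k g x) LinearMap.id
    + TensorProduct.map LinearMap.id (LieAlgebra.ad k g x)

/-- The cyclic rotation `(a⊗b)⊗c ↦ (c⊗a)⊗b` on `(g⊗g)⊗g`. -/
noncomputable def tCyc (k g : Type*) [CommRing k] [AddCommGroup g] [Module k g] :
    (g ⊗[k] g) ⊗[k] g →ₗ[k] (g ⊗[k] g) ⊗[k] g :=
  ((TensorProduct.assoc k g g g).symm.toLinearMap).comp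
    (TensorProduct.comm k (g ⊗[k] g) g).toLinearMap

/-- For submodules `P Q ⊆ g`, the image of `P ⊗ Q` in `g ⊗ g`. -/
noncomputable def tsub (k g : Type*) [CommRing k] [AddCommGroup g] [Module k g]
    (P Q : Submodule k g) : Submodule k (g ⊗[k] g) :=
  LinearMap.range (TensorProduct.map P.subtype Q.subtype)

namespace TensorProduct

variable {k V : Type*} [CommRing k] [AddCommGroup V] [Module k V]

noncomputable def contractLeft : V ⊗[k] V →ₗ[k] Module.Dual k V →ₗ[k] V :=
  (LinearMap.rTensorHom V).flip.compr₂ (TensorProduct.lid k V).toLinearMap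

@[simp] lemma contractLeft_tmul (a b : V) (h : Module.Dual k V) :
    contractLeft (a ⊗ₜ[k] b) h = h a • b := by
  simp [contractLeft]

lemma apply_contractLeft (η : V ⊗[k] V) (f h : Module.Dual k V) :
    f (contractLeft η h) = dualDistrib k V V (h ⊗ₜ f) η := by
  induction η using TensorProduct.induction_on with
  | zero => simp
  | tmul a b => simp
  | add x y hx hy => simp [hx, hy]

lemma apply_contractLeft_of_comm_eq_neg {η : V ⊗[k] V} (hη : TensorProduct.comm k V V η = -η)
    (f h : Module.Dual k V) : f (contractLeft η h) = - h (contractLeft η f) := by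
  have := dualDistrib_apply_comm (f ⊗ₜ[k] h) η
  rw [hη, comm_tmul, map_neg] at this
  rw [apply_contractLeft, apply_contractLeft, ← this]

lemma eq_zero_of_dualDistrib_tmul_apply_eq_zero [Module.Free k V] {η : V ⊗[k] V}
    (hη : ∀ f h : Module.Dual k V, dualDistrib k V V (f ⊗ₜ h) η = 0) : η = 0 := by
  set b := Module.Free.chooseBasis k V
  refine (b.tensorProduct b).repr.map_eq_zero_iff.mp (Finsupp.ext fun ⟨i, j⟩ => ?_)
  rw [Finsupp.zero_apply, ← hη (b.coord i) (b.coord j)]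
  clear hη
  induction η using TensorProduct.induction_on with
  | zero => simp
  | tmul a c => simp [mul_comm]
  | add x y hx hy => simp [hx, hy]

lemma eq_zero_of_contractLeft_eq_zero [Module.Free k V] {η : V ⊗[k] V}
    (hη : contractLeft η = 0) : η = 0 :=
  eq_zero_of_dualDistrib_tmul_apply_eq_zero fun f h => by
    rw [← apply_contractLeft η, hη, LinearMap.zero_apply, map_zero]

end TensorProduct

lemma comp_comp_add_comp_comp_eq_zero_of_swap {k V I : Type*} [CommRing k] [AddCommGroup V]
    [Module k V] (T : I → V →ₗ[k] Module.Dual k V) (hT : ∀ i v w, T i v w = -T i w v)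
    (S : V → Module.Dual k V →ₗ[k] V) (hS : ∀ v (f h : Module.Dual k V), f (S v h) = -h (S v f))
    (hswap : ∀ a b l, S b (T l a) = S a (T l b)) (v : V) (i l : I) :
    (T i).comp ((S v).comp (T l)) + (T l).comp ((S v).comp (T i)) = 0 := by
  have hflip : ∀ y i l a b, T i (S y (T l b)) a = -T l (S y (T i a)) b := fun y i l a b => by
    rw [hT i, hS y, hT l, neg_neg]
  ext x u
  -- six alternating uses of `hswap` and `hflip` return to the start with a sign
  suffices T i (S v (T l x)) u = -T l (S v (T i x)) u by simp [this]
  rw [hswap x v l, hflip x i l u v, hswap u x i, hflip u l i v x, hswap v u l, hflip v i l x u,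
    neg_neg]

lemma map_apply_eq_zero_of_mem_tsub {k M A B : Type*} [CommRing k] [AddCommGroup M] [Module k M]
    [AddCommGroup A] [Module k A] [AddCommGroup B] [Module k B] {P Q : Submodule k M}
    (f : M →ₗ[k] A) {g : M →ₗ[k] B} (hg : ∀ x ∈ Q, g x = 0) {ω : M ⊗[k] M}
    (hω : ω ∈ tsub k M P Q) : TensorProduct.map f g ω = 0 := by
  obtain ⟨t, rfl⟩ := hω
  have hgQ : g ∘ₗ Q.subtype = 0 := LinearMap.ext fun x => hg x x.2
  rw [← LinearMap.comp_apply, ← TensorProduct.map_comp, hgQ, TensorProduct.map_zero_right,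
    LinearMap.zero_apply]

lemma map_subtype_comp_mem_tsub {k M N : Type*} [CommRing k] [AddCommGroup M] [Module k M]
    [AddCommGroup N] [Module k N] {P Q : Submodule k M} (f : N →ₗ[k] P) (g : N →ₗ[k] Q)
    (ω : N ⊗[k] N) : TensorProduct.map (P.subtype ∘ₗ f) (Q.subtype ∘ₗ g) ω ∈ tsub k M P Q := by
  rw [TensorProduct.map_comp]
  exact LinearMap.mem_range_self _ _

lemma mem_tsub_sup_of_map_projectionOnto_eq_zero {k M : Type*} [CommRing k] [AddCommGroup M]
    [Module k M] {P Q : Submodule k M} (hPQ : IsCompl P Q) {ω : M ⊗[k] M}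
    (hω : TensorProduct.map (Q.projectionOnto P hPQ.symm) (Q.projectionOnto P hPQ.symm) ω = 0) :
    ω ∈ tsub k M Q P ⊔ tsub k M P Q ⊔ tsub k M P P := by
  set A := P.subtype ∘ₗ P.projectionOnto Q hPQ
  set B := Q.subtype ∘ₗ Q.projectionOnto P hPQ.symm
  have hid : A + B = LinearMap.id := Submodule.projection_add_projection_eq_id hPQ
  have hsplit : ω = TensorProduct.map B B ω + TensorProduct.map B A ω
      + TensorProduct.map A B ω + TensorProduct.map A A ω := by
    conv_lhs => rw [← LinearMap.id_apply (R := k) ω, ← TensorProduct.map_id, ← hid]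
    simp only [TensorProduct.map_add_left, TensorProduct.map_add_right, LinearMap.add_apply]
    abel
  have hBB : TensorProduct.map B B ω = 0 := by
    rw [TensorProduct.map_comp, LinearMap.comp_apply, hω, map_zero]
  rw [hsplit, hBB, zero_add]
  refine add_mem (add_mem ?_ ?_) ?_
  · exact Submodule.mem_sup_left (Submodule.mem_sup_left (map_subtype_comp_mem_tsub _ _ ω))
  · exact Submodule.mem_sup_left (Submodule.mem_sup_right (map_subtype_comp_mem_tsub _ _ ω))
  · exact Submodule.mem_sup_right (map_subtype_comp_mem_tsub _ _ ω)

section TwoStep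

variable {k n : Type*} [CommRing k] [LieRing n] [LieAlgebra k n]

@[simp] lemma tAct_tmul (x a b : n) : tAct k n x (a ⊗ₜ b) = ⁅x, a⁆ ⊗ₜ b + a ⊗ₜ ⁅x, b⁆ := by
  simp [tAct]

lemma tAct_eq_zero_of_mem_center {z : n} (hz : z ∈ LieAlgebra.center k n) : tAct k n z = 0 := by
  rw [← LieAlgebra.self_module_ker_eq_center, LieModule.mem_ker] at hz
  have had : LieAlgebra.ad k n z = 0 := LinearMap.ext hz
  simp [tAct, had]

lemma tAct_apply_eq_zero_of_mem_center {δ : n →ₗ[k] n ⊗[k] n}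
    (hcoc : ∀ x y, δ ⁅x, y⁆ = tAct k n x (δ y) - tAct k n y (δ x))
    {z : n} (hz : z ∈ LieAlgebra.center k n) (x : n) : tAct k n x (δ z) = 0 := by
  have h := hcoc x z
  rwa [(LieModule.mem_maxTrivSubmodule k n n z).mp hz x, map_zero, tAct_eq_zero_of_mem_center hz,
    LinearMap.zero_apply, sub_zero, eq_comm] at h

variable {Z W : Submodule k n} (hZW : IsCompl Z W) {I : Type*} [Fintype I]
  (bz : Module.Basis I k Z) (T : I → W →ₗ[k] Module.Dual k W)

lemma coord_projectionOnto_lie (hZ : Z ≤ (LieAlgebra.center k n).toSubmodule)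
    (hT : ∀ v w : W, ⁅(v : n), (w : n)⁆ = ∑ i, T i v w • (bz i : n)) (l : I) (a : W) (x : n) :
    bz.coord l (Z.projectionOnto W hZW ⁅(a : n), x⁆) = T l a (W.projectionOnto Z hZW.symm x) := by
  set w := W.projectionOnto Z hZW.symm x
  have hx : ⁅(a : n), x⁆ = ((∑ i, T i a w • bz i : Z) : n) := by
    conv_lhs => rw [← Submodule.projection_add_projection_eq_self hZW.symm x]
    rw [lie_add, (LieModule.mem_maxTrivSubmodule k n n _).mp
      (hZ (Submodule.projection_apply_mem _ _)) _, add_zero]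
    exact (hT a w).trans (by simp only [Submodule.coe_sum, Submodule.coe_smul])
  rw [hx, Submodule.projectionOnto_apply_left, Module.Basis.coord_apply, Module.Basis.repr_sum_self]

lemma lid_map_tAct (hZ : Z ≤ (LieAlgebra.center k n).toSubmodule)
    (h2step : ∀ x y : n, ⁅x, y⁆ ∈ Z)
    (hT : ∀ v w : W, ⁅(v : n), (w : n)⁆ = ∑ i, T i v w • (bz i : n)) (l : I) (a : W)
    (ω : n ⊗[k] n) :
    TensorProduct.lid k W (TensorProduct.map (bz.coord l ∘ₗ Z.projectionOnto W hZW)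
        (W.projectionOnto Z hZW.symm) (tAct k n a ω))
      = contractLeft (TensorProduct.map (W.projectionOnto Z hZW.symm)
          (W.projectionOnto Z hZW.symm) ω) (T l a) := by
  induction ω using TensorProduct.induction_on with
  | zero => simp
  | tmul x y =>
    have hy : W.projectionOnto Z hZW.symm ⁅(a : n), y⁆ = 0 :=
      Submodule.projectionOnto_apply_of_mem_right _ (h2step _ _)
    simp [hy, coord_projectionOnto_lie hZW bz T hZ hT]
  | add x y hx hy => simp only [map_add, hx, hy, LinearMap.add_apply]

lemma contractLeft_map_projectionOnto_swap (hZ : Z ≤ (LieAlgebra.center k n).toSubmodule)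
    (h2step : ∀ x y : n, ⁅x, y⁆ ∈ Z)
    (hT : ∀ v w : W, ⁅(v : n), (w : n)⁆ = ∑ i, T i v w • (bz i : n)) {δ : n →ₗ[k] n ⊗[k] n}
    (hcoc : ∀ x y, δ ⁅x, y⁆ = tAct k n x (δ y) - tAct k n y (δ x))
    (hδZ : ∀ z ∈ Z, δ z ∈ tsub k n Z Z) (a b : W) (l : I) :
    contractLeft (TensorProduct.map (W.projectionOnto Z hZW.symm)
        (W.projectionOnto Z hZW.symm) (δ b)) (T l a)
      = contractLeft (TensorProduct.map (W.projectionOnto Z hZW.symm)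
          (W.projectionOnto Z hZW.symm) (δ a)) (T l b) := by
  have h0 : TensorProduct.lid k W (TensorProduct.map (bz.coord l ∘ₗ Z.projectionOnto W hZW)
      (W.projectionOnto Z hZW.symm) (δ ⁅(a : n), (b : n)⁆)) = 0 := by
    rw [map_apply_eq_zero_of_mem_tsub _ (fun x hx => Submodule.projectionOnto_apply_of_mem_right
      hZW.symm hx) (hδZ _ (h2step a b)), map_zero]
  rwa [hcoc, map_sub, map_sub, lid_map_tAct hZW bz T hZ h2step hT,
    lid_map_tAct hZW bz T hZ h2step hT, sub_eq_zero] at h0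

end TwoStep

theorem stmt5_general (k n : Type*) [Field k] [LieRing n] [LieAlgebra k n]
    (h2step : ∀ x y : n, ⁅x, y⁆ ∈ LieAlgebra.center k n)
    (W : Submodule k n)
    (hcompl : IsCompl (LieAlgebra.center k n).toSubmodule W)
    -- basis of the center and the maps T_i determined by the bracket:
    {I : Type*} [Fintype I]
    (bz : Module.Basis I k (LieAlgebra.center k n).toSubmodule)
    (T : I → (W →ₗ[k] Module.Dual k W))
    (hTanti : ∀ i (v w : W), T i v w = - T i w v)
    (hT : ∀ v w : W, (⁅(v : n), (w : n)⁆ : n) = ∑ i, T i v w • ((bz i : n)))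
    -- n is of TST type:
    (hTST : ∀ S : Module.Dual k W →ₗ[k] W,
      (∀ f h : Module.Dual k W, f (S h) = - h (S f)) →
      (∀ i l : I, (T i).comp (S.comp (T l)) + (T l).comp (S.comp (T i)) = 0) →
      S = 0)
    -- (Λ²n)^n = Λ²z:
    (hinv : ∀ ω : n ⊗[k] n, TensorProduct.comm k n n ω = -ω →
      ((∀ x : n, tAct k n x ω = 0) ↔
        ω ∈ tsub k n (LieAlgebra.center k n).toSubmodule (LieAlgebra.center k n).toSubmodule))
    -- δ is a Lie bialgebra structure:
    (δ : n →ₗ[k] n ⊗[k] n)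
    (hanti : ∀ x, TensorProduct.comm k n n (δ x) = - δ x)
    (hcoc : ∀ x y, δ ⁅x, y⁆ = tAct k n x (δ y) - tAct k n y (δ x)) :
    (∀ z ∈ (LieAlgebra.center k n).toSubmodule,
      δ z ∈ tsub k n (LieAlgebra.center k n).toSubmodule (LieAlgebra.center k n).toSubmodule)
    ∧ (∀ v ∈ W, δ v ∈
        tsub k n W (LieAlgebra.center k n).toSubmodule
          ⊔ tsub k n (LieAlgebra.center k n).toSubmodule W
          ⊔ tsub k n (LieAlgebra.center k n).toSubmodule (LieAlgebra.center k n).toSubmodule) := by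
  have hδZ : ∀ z ∈ (LieAlgebra.center k n).toSubmodule,
      δ z ∈ tsub k n (LieAlgebra.center k n).toSubmodule (LieAlgebra.center k n).toSubmodule :=
    fun z hz => (hinv _ (hanti z)).mp (tAct_apply_eq_zero_of_mem_center hcoc hz)
  refine ⟨hδZ, fun v hv => mem_tsub_sup_of_map_projectionOnto_eq_zero hcompl ?_⟩
  set π := W.projectionOnto _ hcompl.symm
  set S : W → Module.Dual k W →ₗ[k] W := fun a => contractLeft (TensorProduct.map π π (δ a))
  have hSanti : ∀ a (f h : Module.Dual k W), f (S a h) = -h (S a f) := fun a =>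
    apply_contractLeft_of_comm_eq_neg (by rw [← TensorProduct.map_comm, hanti, map_neg])
  have hSswap : ∀ a b l, S b (T l a) = S a (T l b) :=
    contractLeft_map_projectionOnto_swap hcompl bz T le_rfl h2step hT hcoc hδZ
  have hS : S ⟨v, hv⟩ = 0 :=
    hTST _ (hSanti _) (comp_comp_add_comp_comp_eq_zero_of_swap T hTanti S hSanti hSswap _)
  exact eq_zero_of_contractLeft_eq_zero hS

/-- if the finite-dimensional 2-step nilpotent Lie algebra `n = W ⊕ z` is of
TST type and `(Λ²n)^n = Λ²z`, then every Lie bialgebra structure `δ` on `n` satisfies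
`δ(z) ⊆ Λ²z` and `δ(W) ⊆ W∧z ⊕ Λ²z`. -/
theorem stmt5 (k n : Type*) [Field k] [CharZero k] [LieRing n] [LieAlgebra k n]
    [FiniteDimensional k n]
    (h2step : ∀ x y : n, ⁅x, y⁆ ∈ LieAlgebra.center k n)
    (W : Submodule k n)
    (hcompl : IsCompl (LieAlgebra.center k n).toSubmodule W)
    -- basis of the center and the maps T_i determined by the bracket:
    {I : Type*} [Fintype I]
    (bz : Module.Basis I k (LieAlgebra.center k n).toSubmodule)
    (T : I → (W →ₗ[k] Module.Dual k W))
    (hTanti : ∀ i (v w : W), T i v w = - T i w v)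
    (hT : ∀ v w : W, (⁅(v : n), (w : n)⁆ : n) = ∑ i, T i v w • ((bz i : n)))
    -- n is of TST type:
    (hTST : ∀ S : Module.Dual k W →ₗ[k] W,
      (∀ f h : Module.Dual k W, f (S h) = - h (S f)) →
      (∀ i l : I, (T i).comp (S.comp (T l)) + (T l).comp (S.comp (T i)) = 0) →
      S = 0)
    -- (Λ²n)^n = Λ²z:
    (hinv : ∀ ω : n ⊗[k] n, TensorProduct.comm k n n ω = -ω →
      ((∀ x : n, tAct k n x ω = 0) ↔
        ω ∈ tsub k n (LieAlgebra.center k n).toSubmodule (LieAlgebra.center k n).toSubmodule))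
    -- δ is a Lie bialgebra structure:
    (δ : n →ₗ[k] n ⊗[k] n)
    (hanti : ∀ x, TensorProduct.comm k n n (δ x) = - δ x)
    (hcoJ : ∀ x, (TensorProduct.map δ LinearMap.id) (δ x)
        + tCyc k n ((TensorProduct.map δ LinearMap.id) (δ x))
        + tCyc k n (tCyc k n ((TensorProduct.map δ LinearMap.id) (δ x))) = 0)
    (hcoc : ∀ x y, δ ⁅x, y⁆ = tAct k n x (δ y) - tAct k n y (δ x)) :
    (∀ z ∈ (LieAlgebra.center k n).toSubmodule,
      δ z ∈ tsub k n (LieAlgebra.center k n).toSubmodule (LieAlgebra.center k n).toSubmodule)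
    ∧ (∀ v ∈ W, δ v ∈
        tsub k n W (LieAlgebra.center k n).toSubmodule
          ⊔ tsub k n (LieAlgebra.center k n).toSubmodule W
          ⊔ tsub k n (LieAlgebra.center k n).toSubmodule (LieAlgebra.center k n).toSubmodule) :=
  stmt5_general k n h2step W hcompl bz T hTanti hT hTST hinv δ hanti hcoc
end

section
/- Let G = (V,A) be a finite simple graph in which every vertex has degree at least 2, and let n = n(G) = W ⊕ z be its graph algebra over a field k of characteristic zero. Then: (i) (Λ²n)^n = Λ²z; (ii) n is of TST type, i.e. the only antisymmetric linear map S : W* → W with T_α S T_β + T_β S T_α = 0 for all edges α, β is S = 0; and consequently (iii) every Lie bialgebra structure δ on n satisfies δ(z) ⊆ Λ²z and δ(W) ⊆ W∧z ⊕ Λ²z. -/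
open TensorProduct

set_option synthInstance.maxHeartbeats 1000000
set_option maxHeartbeats 1000000

/-- The degree (valency) of a vertex `e` in the graph with edge set `A` and
endpoint maps `src`, `tgt`. -/
def deg {V A : Type*} [Fintype A] [DecidableEq V] (src tgt : A → V) (e : V) : ℕ :=
  (Finset.univ.filter (fun a : A => src a = e ∨ tgt a = e)).card

/-!
All three parts are read off coefficients in the basis `e_i = B (inl i)`, `z_a = B (inr a)`.
The `z_β`-coordinate of `⁅e_i, ∑ φ_l e_l⁆` is `T_β(e_i, φ)`, which is `±φ_l` when `β` joins `l` to
`i`. Degree `≥ 2` and simplicity provide, at every vertex, an edge whose other end avoids any one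
prescribed vertex. Hence an invariant `ω ∈ Λ²n` has no `W ⊗ W` coefficients, and no `W ⊗ z`
coefficient `(l, a)` unless `l` and the two ends of `a` form a triangle; there the relations at the
three corners close up with total sign `-1`. Evaluating `T_α S T_β + T_β S T_α` at `(e_n', e_m')`,
for edges `β = nn'` and `α = mm'` with `m' ∉ {n, n'}`, isolates `± S(e_n^*)(e_m)`. For (iii), `δ z`
is invariant because `z` is central, so it lies in `Λ²z` by (i); then the cocycle condition on
`⁅e_i, e_j⁆ ∈ z` gives the `W ⊗ W` coefficients of the `δ e_j` relations of the same kind.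
-/

section Graph

variable {V A : Type*} (src tgt : A → V)

def Joins (β : A) (i j : V) : Prop :=
  (src β = i ∧ tgt β = j) ∨ (src β = j ∧ tgt β = i)

/-- The form `e_s* ∧ e_t*` of the edge `β : s → t`, i.e. `T_β`. It is allowed to take values in
a module so that it can be applied to the family of coordinate functionals `l ↦ B.coord (inl l)`,
where it becomes the `z_β`-coordinate of `⁅∑ v_i e_i, ·⁆` (`IsGraphAlgebra.coord_inr_comp_ad`). -/
def edgeForm {k M : Type*} [Ring k] [AddCommGroup M] [Module k M] (β : A) (v : V → k)
    (w : V → M) : M :=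
  v (src β) • w (tgt β) - v (tgt β) • w (src β)

variable {src tgt}

lemma eq_of_joins
    (hsimple : ∀ a b : A, Joins src tgt a (src b) (tgt b) → a = b)
    {β γ : A} {i j : V} (hβ : Joins src tgt β i j) (hγ : Joins src tgt γ i j) : β = γ := by
  apply hsimple
  rcases hβ with ⟨rfl, rfl⟩ | ⟨rfl, rfl⟩ <;> rcases hγ with ⟨h1, h2⟩ | ⟨h1, h2⟩
  exacts [Or.inl ⟨h1.symm, h2.symm⟩, Or.inr ⟨h2.symm, h1.symm⟩,
    Or.inr ⟨h2.symm, h1.symm⟩, Or.inl ⟨h1.symm, h2.symm⟩]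

lemma edgeForm_swap {k : Type*} [CommRing k] (β : A) (v w : V → k) :
    edgeForm src tgt β v w = -edgeForm src tgt β w v := by
  simp only [edgeForm, smul_eq_mul]; ring

lemma edgeForm_apply {k M P : Type*} [CommRing k] [AddCommGroup M] [Module k M] [AddCommGroup P]
    [Module k P] (β : A) (v : V → k) (w : V → M →ₗ[k] P) (x : M) :
    edgeForm src tgt β v w x = edgeForm src tgt β v (fun l => w l x) := by
  simp [edgeForm]

variable [DecidableEq V]

variable (src tgt) in
def otherEnd (i : V) (β : A) : V :=
  if src β = i then tgt β else src β

variable (src) in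
def orient (k : Type*) [One k] [Neg k] (i : V) (β : A) : k :=
  if src β = i then 1 else -1

lemma joins_otherEnd {β : A} {i : V} (hβ : src β = i ∨ tgt β = i) :
    Joins src tgt β i (otherEnd src tgt i β) := by
  unfold Joins otherEnd
  by_cases h : src β = i <;> simp_all

lemma eq_of_otherEnd_eq
    (hsimple : ∀ a b : A, Joins src tgt a (src b) (tgt b) → a = b)
    {β γ : A} {i : V} (hβ : src β = i ∨ tgt β = i) (hγ : src γ = i ∨ tgt γ = i)
    (h : otherEnd src tgt i β = otherEnd src tgt i γ) : β = γ :=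
  eq_of_joins hsimple (joins_otherEnd hβ) (h ▸ joins_otherEnd hγ)

lemma exists_pair_incident [Fintype A] {i : V} (hdeg : 2 ≤ deg src tgt i) :
    ∃ β γ : A, (src β = i ∨ tgt β = i) ∧ (src γ = i ∨ tgt γ = i) ∧ β ≠ γ := by
  obtain ⟨β, hβ, γ, hγ, hne⟩ := Finset.one_lt_card.mp hdeg
  simp only [Finset.mem_filter, Finset.mem_univ, true_and] at hβ hγ
  exact ⟨β, γ, hβ, hγ, hne⟩

lemma exists_incident_otherEnd_ne [Fintype A]
    (hsimple : ∀ a b : A, Joins src tgt a (src b) (tgt b) → a = b)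
    {i : V} (hdeg : 2 ≤ deg src tgt i) (j : V) :
    ∃ β : A, (src β = i ∨ tgt β = i) ∧ otherEnd src tgt i β ≠ j := by
  obtain ⟨β, γ, hβ, hγ, hne⟩ := exists_pair_incident hdeg
  by_cases h : otherEnd src tgt i β = j
  · exact ⟨γ, hγ, fun h' => hne (eq_of_otherEnd_eq hsimple hβ hγ (h.trans h'.symm))⟩
  · exact ⟨β, hβ, h⟩

section EdgeForm

variable {k M : Type*} [Field k] [AddCommGroup M] [Module k M]

lemma orient_ne_zero (i : V) (β : A) : orient src k i β ≠ 0 := by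
  unfold orient; split_ifs <;> simp

lemma edgeForm_single_src (hloop : ∀ a, src a ≠ tgt a) (β : A) (w : V → M) :
    edgeForm src tgt β (Pi.single (src β) (1 : k)) w = w (tgt β) := by
  simp [edgeForm, (hloop β).symm]

lemma edgeForm_single_tgt (hloop : ∀ a, src a ≠ tgt a) (β : A) (w : V → M) :
    edgeForm src tgt β (Pi.single (tgt β) (1 : k)) w = -w (src β) := by
  simp [edgeForm, hloop β]

lemma edgeForm_single (hloop : ∀ a, src a ≠ tgt a) {β : A} {i : V}
    (hβ : src β = i ∨ tgt β = i) (w : V → M) :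
    edgeForm src tgt β (Pi.single i (1 : k)) w
      = orient src k i β • w (otherEnd src tgt i β) := by
  rcases hβ with rfl | rfl
  · simp [edgeForm_single_src hloop, orient, otherEnd]
  · simp [edgeForm_single_tgt hloop, orient, otherEnd, hloop β]

lemma edgeForm_single_otherEnd (hloop : ∀ a, src a ≠ tgt a) {β : A} {i : V}
    (hβ : src β = i ∨ tgt β = i) (w : V → M) :
    edgeForm src tgt β (Pi.single (otherEnd src tgt i β) (1 : k)) w
      = -orient src k i β • w i := by
  rcases hβ with rfl | rfl
  · simp [edgeForm_single_tgt hloop, orient, otherEnd]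
  · simp [edgeForm_single_src hloop, orient, otherEnd, hloop β]

lemma edgeForm_single_eq_zero {β : A} {j : V} (hs : src β ≠ j) (ht : tgt β ≠ j) (w : V → M) :
    edgeForm src tgt β (Pi.single j (1 : k)) w = 0 := by
  simp [edgeForm, hs, ht]

lemma edgeForm_single_eq_zero_of_joins {β : A} {i o j : V} (hβ : Joins src tgt β i o)
    (hi : i ≠ j) (ho : o ≠ j) (w : V → M) :
    edgeForm src tgt β (Pi.single j (1 : k)) w = 0 := by
  rcases hβ with ⟨rfl, rfl⟩ | ⟨rfl, rfl⟩
  exacts [edgeForm_single_eq_zero hi ho w, edgeForm_single_eq_zero ho hi w]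

lemma joins_of_edgeForm_single_ne_zero {β : A} {i l : V}
    (h : edgeForm src tgt β (Pi.single i (1 : k)) (Pi.single l (1 : k)) ≠ 0) :
    Joins src tgt β i l := by
  by_contra hj
  simp only [Joins, not_or, not_and] at hj
  apply h
  simp only [edgeForm, Pi.single_apply, smul_eq_mul]
  split_ifs <;> simp_all

end EdgeForm

end Graph

section Relations

variable {V A k : Type*} [DecidableEq V] [Field k] {src tgt : A → V}

lemma eq_zero_of_edgeForm_single_eq_zero (hloop : ∀ a, src a ≠ tgt a)
    (hinc : ∀ l, ∃ β, src β = l ∨ tgt β = l) {φ : V → k}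
    (h : ∀ i β, edgeForm src tgt β (Pi.single i (1 : k)) φ = 0) : φ = 0 := by
  funext l
  obtain ⟨β, hβ⟩ := hinc l
  simpa [edgeForm_single_otherEnd hloop hβ, orient_ne_zero] using h (otherEnd src tgt l β) β

lemma apply_eq_zero_of_edgeForm_single_comm [Fintype A] (hloop : ∀ a, src a ≠ tgt a)
    (hsimple : ∀ a b : A, Joins src tgt a (src b) (tgt b) → a = b)
    (hdeg : ∀ e : V, 2 ≤ deg src tgt e) {φ : V → V → k}
    (h : ∀ i j β, edgeForm src tgt β (Pi.single i (1 : k)) (φ j)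
      = edgeForm src tgt β (Pi.single j (1 : k)) (φ i))
    {j l : V} (hlj : l ≠ j) : φ j l = 0 := by
  obtain ⟨β, hβ, hoj⟩ := exists_incident_otherEnd_ne hsimple (hdeg l) j
  have h' := h (otherEnd src tgt l β) j β
  rw [edgeForm_single_otherEnd hloop hβ,
    edgeForm_single_eq_zero_of_joins (joins_otherEnd hβ) hlj hoj] at h'
  simpa [orient_ne_zero] using h'

/-- The orientation signs around a triangle multiply to `-1`, so the three relations
at its corners force `c l a = -c l a`. -/
lemma eq_zero_of_edgeForm_single_symm_of_triangle [NeZero (2 : k)]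
    (hloop : ∀ a, src a ≠ tgt a) {c : V → A → k}
    (h : ∀ i β b, edgeForm src tgt β (Pi.single i (1 : k)) (fun l => c l b)
      = edgeForm src tgt b (Pi.single i (1 : k)) (fun l => c l β))
    {l : V} {a β γ : A} (hβ : src β = l ∨ tgt β = l) (hγ : src γ = l ∨ tgt γ = l)
    (hβa : otherEnd src tgt l β = src a) (hγa : otherEnd src tgt l γ = tgt a) : c l a = 0 := by
  have h1 := h (otherEnd src tgt l β) β a
  have h2 := h l γ β
  have h3 := h (otherEnd src tgt l γ) γ a
  rw [edgeForm_single_otherEnd hloop hβ, hβa, edgeForm_single_src hloop] at h1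
  rw [edgeForm_single hloop hγ, edgeForm_single hloop hβ, hβa, hγa] at h2
  rw [edgeForm_single_otherEnd hloop hγ, hγa, edgeForm_single_tgt hloop] at h3
  simp only [smul_eq_mul] at h1 h2 h3
  have h4 : 2 * (orient src k l β * orient src k l γ) * c l a = 0 := by
    linear_combination -orient src k l γ * h1 - h2 - orient src k l β * h3
  simpa [orient_ne_zero, two_ne_zero] using h4

lemma eq_zero_of_edgeForm_single_symm [NeZero (2 : k)] [Fintype A]
    (hloop : ∀ a, src a ≠ tgt a)
    (hsimple : ∀ a b : A, Joins src tgt a (src b) (tgt b) → a = b)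
    (hdeg : ∀ e : V, 2 ≤ deg src tgt e) {c : V → A → k}
    (h : ∀ i β b, edgeForm src tgt β (Pi.single i (1 : k)) (fun l => c l b)
      = edgeForm src tgt b (Pi.single i (1 : k)) (fun l => c l β))
    (l : V) (a : A) : c l a = 0 := by
  by_cases hex : ∃ β, (src β = l ∨ tgt β = l) ∧
      src a ≠ otherEnd src tgt l β ∧ tgt a ≠ otherEnd src tgt l β
  · obtain ⟨β, hβ, hs, ht⟩ := hex
    have h' := h (otherEnd src tgt l β) β a
    rw [edgeForm_single_otherEnd hloop hβ, edgeForm_single_eq_zero hs ht] at h'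
    simpa [orient_ne_zero] using h'
  push Not at hex
  obtain ⟨β, γ, hβ, hγ, hne⟩ := exists_pair_incident (hdeg l)
  have hoth : otherEnd src tgt l β ≠ otherEnd src tgt l γ :=
    fun h' => hne (eq_of_otherEnd_eq hsimple hβ hγ h')
  by_cases hβa : src a = otherEnd src tgt l β
  · have hγa := hex γ hγ fun h' => hoth (hβa.symm.trans h')
    exact eq_zero_of_edgeForm_single_symm_of_triangle hloop h hβ hγ hβa.symm hγa.symm
  · have hγa : src a = otherEnd src tgt l γ := by
      by_contra h'
      exact hoth ((hex β hβ hβa).symm.trans (hex γ hγ h'))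
    exact eq_zero_of_edgeForm_single_symm_of_triangle hloop h hγ hβ hγa.symm
      (hex β hβ hβa).symm

theorem eq_zero_of_tst [Fintype V] [Fintype A] (hloop : ∀ a, src a ≠ tgt a)
    (hsimple : ∀ a b : A, Joins src tgt a (src b) (tgt b) → a = b)
    (hdeg : ∀ e : V, 2 ≤ deg src tgt e) (T : A → ((V → k) →ₗ[k] Module.Dual k (V → k)))
    (hT : ∀ (a : A) (v w : V → k), T a v w = v (src a) * w (tgt a) - v (tgt a) * w (src a))
    (S : Module.Dual k (V → k) →ₗ[k] (V → k))
    (hTST : ∀ a b : A, (T a).comp (S.comp (T b)) + (T b).comp (S.comp (T a)) = 0) :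
    S = 0 := by
  have hT' : ∀ a v w, T a v w = edgeForm src tgt a v w := hT
  have hσ : ∀ n m, S (LinearMap.proj n) m = 0 := by
    intro n m
    obtain ⟨a, ha, ham⟩ := exists_incident_otherEnd_ne hsimple (hdeg m) n
    obtain ⟨b, hb, hbn⟩ := exists_incident_otherEnd_ne hsimple (hdeg n) (otherEnd src tgt m a)
    have hTb : T b (Pi.single (otherEnd src tgt n b) 1) = -orient src k n b • LinearMap.proj n := by
      ext w
      simp [hT', edgeForm_single_otherEnd hloop hb]
    have h := LinearMap.congr_fun (LinearMap.congr_fun (hTST a b)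
      (Pi.single (otherEnd src tgt n b) 1)) (Pi.single (otherEnd src tgt m a) 1)
    simp only [LinearMap.add_apply, LinearMap.comp_apply, LinearMap.zero_apply, hT', hTb] at h
    rw [edgeForm_swap a, edgeForm_single_otherEnd hloop ha, edgeForm_swap b,
      edgeForm_single_eq_zero_of_joins (joins_otherEnd hb) ham.symm hbn] at h
    simpa [orient_ne_zero] using h
  refine (Pi.basisFun k V).dualBasis.ext fun n => funext fun m => ?_
  have hproj : (Pi.basisFun k V).dualBasis n = LinearMap.proj n := by
    ext v; simp
  simpa [hproj] using hσ n m

end Relations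

section TensorCoefficients

variable {k N ι : Type*} [CommRing k] [AddCommGroup N] [Module k N]

lemma tmul_mem_tsub {P Q : Submodule k N} {x y : N} (hx : x ∈ P) (hy : y ∈ Q) :
    x ⊗ₜ[k] y ∈ tsub k N P Q :=
  ⟨⟨x, hx⟩ ⊗ₜ ⟨y, hy⟩, rfl⟩

lemma dualDistrib_tAct {g : Type*} [LieRing g] [LieAlgebra k g] (f f' : Module.Dual k g)
    (x : g) (ω : g ⊗[k] g) :
    dualDistrib k g g (f ⊗ₜ f') (tAct k g x ω)
      = dualDistrib k g g ((f ∘ₗ LieAlgebra.ad k g x) ⊗ₜ f') ω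
        + dualDistrib k g g (f ⊗ₜ (f' ∘ₗ LieAlgebra.ad k g x)) ω := by
  induction ω using TensorProduct.induction_on with
  | zero => simp
  | tmul y z => simp [tAct]
  | add y z hy hz => simp only [map_add, hy, hz]; ring

variable (B : Module.Basis ι k N)

noncomputable def tcoeff (p q : ι) : N ⊗[k] N →ₗ[k] k :=
  Finsupp.lapply (p, q) ∘ₗ (B.tensorProduct B).repr.toLinearMap

lemma tcoeff_eq_dualDistrib (p q : ι) :
    tcoeff B p q = dualDistrib k N N (B.coord p ⊗ₜ B.coord q) :=
  TensorProduct.ext' fun x y => by simp [tcoeff, mul_comm]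

lemma tcoeff_comm (p q : ι) (ω : N ⊗[k] N) :
    tcoeff B p q (TensorProduct.comm k N N ω) = tcoeff B q p ω := by
  induction ω using TensorProduct.induction_on with
  | zero => simp
  | tmul x y => simp [tcoeff_eq_dualDistrib, mul_comm]
  | add x y hx hy => simp only [map_add, hx, hy]

lemma mem_of_tcoeff_ne_zero [Fintype ι] {S : Submodule k (N ⊗[k] N)} {ω : N ⊗[k] N}
    (h : ∀ p q, tcoeff B p q ω ≠ 0 → B p ⊗ₜ B q ∈ S) : ω ∈ S := by
  rw [← (B.tensorProduct B).sum_repr ω]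
  refine Submodule.sum_mem _ fun ⟨p, q⟩ _ => ?_
  by_cases h0 : tcoeff B p q ω = 0
  · simp_all [tcoeff]
  · simpa using S.smul_mem _ (h p q h0)

lemma tcoeff_eq_zero_of_mem_tsub {P Q : Submodule k N} {q : ι}
    (hQ : Q ≤ LinearMap.ker (B.coord q)) (p : ι) {ω : N ⊗[k] N} (hω : ω ∈ tsub k N P Q) :
    tcoeff B p q ω = 0 := by
  obtain ⟨y, rfl⟩ := hω
  induction y using TensorProduct.induction_on with
  | zero => simp
  | tmul x y => simp [tcoeff_eq_dualDistrib, LinearMap.mem_ker.mp (hQ y.2)]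
  | add y z hy hz => simp only [map_add, hy, hz, add_zero]

end TensorCoefficients

open Sum

structure IsGraphAlgebra {k V A N : Type*} [CommRing k] [LieRing N] [LieAlgebra k N]
    (src tgt : A → V) (B : Module.Basis (V ⊕ A) k N) : Prop where
  lie_inr : ∀ (a : A) (x : N), ⁅B (inr a), x⁆ = 0
  lie_src_tgt : ∀ a : A, ⁅B (inl (src a)), B (inl (tgt a))⁆ = B (inr a)
  lie_eq_zero : ∀ i j : V, (∀ a, ¬Joins src tgt a i j) → ⁅B (inl i), B (inl j)⁆ = 0

namespace IsGraphAlgebra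

variable {k V A N : Type*} [Field k] [LieRing N] [LieAlgebra k N]
  {src tgt : A → V} {B : Module.Basis (V ⊕ A) k N}

local notation "𝔴" => Submodule.span k (Set.range fun i : V => B (inl i))
local notation "𝔷" => Submodule.span k (Set.range fun a : A => B (inr a))

lemma span_inr_le_ker_coord (m : V) : 𝔷 ≤ LinearMap.ker (B.coord (inl m)) :=
  Submodule.span_le.mpr (Set.range_subset_iff.mpr fun a => by simp)

lemma mem_sup_tsub_of_tcoeff_inl_inl [Fintype V] [Fintype A] {ω : N ⊗[k] N}
    (h : ∀ l m, tcoeff B (inl l) (inl m) ω = 0) :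
    ω ∈ tsub k N 𝔴 𝔷 ⊔ tsub k N 𝔷 𝔴 ⊔ tsub k N 𝔷 𝔷 := by
  refine mem_of_tcoeff_ne_zero B fun p q hpq => ?_
  rcases p with l | β <;> rcases q with m | b
  · exact absurd (h l m) hpq
  · exact Submodule.mem_sup_left (Submodule.mem_sup_left
      (tmul_mem_tsub (Submodule.subset_span ⟨l, rfl⟩) (Submodule.subset_span ⟨b, rfl⟩)))
  · exact Submodule.mem_sup_left (Submodule.mem_sup_right
      (tmul_mem_tsub (Submodule.subset_span ⟨β, rfl⟩) (Submodule.subset_span ⟨m, rfl⟩)))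
  · exact Submodule.mem_sup_right
      (tmul_mem_tsub (Submodule.subset_span ⟨β, rfl⟩) (Submodule.subset_span ⟨b, rfl⟩))

lemma ad_eq_zero_of_mem (hG : IsGraphAlgebra src tgt B) {z : N} (hz : z ∈ 𝔷) :
    LieAlgebra.ad k N z = 0 := by
  have hle : 𝔷 ≤ LinearMap.ker (LieAlgebra.ad k N : N →ₗ[k] Module.End k N) :=
    Submodule.span_le.mpr (Set.range_subset_iff.mpr fun a => LinearMap.ext (hG.lie_inr a))
  exact hle hz

lemma lie_eq_zero_of_mem (hG : IsGraphAlgebra src tgt B) (x : N) {z : N} (hz : z ∈ 𝔷) :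
    ⁅x, z⁆ = 0 := by
  rw [← lie_skew, neg_eq_zero]
  exact LinearMap.congr_fun (hG.ad_eq_zero_of_mem hz) x

lemma tAct_eq_zero_of_mem_tsub (hG : IsGraphAlgebra src tgt B) (x : N) {ω : N ⊗[k] N}
    (hω : ω ∈ tsub k N 𝔷 𝔷) : tAct k N x ω = 0 := by
  obtain ⟨y, rfl⟩ := hω
  have hx : ∀ z : 𝔷, ⁅x, (z : N)⁆ = 0 := fun z => hG.lie_eq_zero_of_mem x z.2
  induction y using TensorProduct.induction_on with
  | zero => simp
  | tmul y z => simp [tAct, hx]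
  | add y z hy hz => simp only [map_add, hy, hz, add_zero]

variable [DecidableEq V] [Fintype A]

lemma lie_inl_inl (hG : IsGraphAlgebra src tgt B) (hloop : ∀ a, src a ≠ tgt a)
    (hsimple : ∀ a b : A, Joins src tgt a (src b) (tgt b) → a = b) (i l : V) :
    ⁅B (inl i), B (inl l)⁆
      = ∑ β, edgeForm src tgt β (Pi.single i (1 : k)) (Pi.single l (1 : k)) • B (inr β) := by
  by_cases h : ∃ a, Joins src tgt a i l
  · obtain ⟨a, ha⟩ := h
    rw [Finset.sum_eq_single a (fun β _ hβa => by
        rw [smul_eq_zero]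
        by_contra hne
        exact hβa (eq_of_joins hsimple (joins_of_edgeForm_single_ne_zero (not_or.mp hne).1) ha))
      (by simp)]
    rcases ha with ⟨rfl, rfl⟩ | ⟨rfl, rfl⟩
    · simp [edgeForm_single_src hloop, hG.lie_src_tgt]
    · rw [← lie_skew, hG.lie_src_tgt]
      simp [edgeForm_single_tgt hloop]
  · push Not at h
    rw [hG.lie_eq_zero i l h]
    refine (Finset.sum_eq_zero fun β _ => ?_).symm
    rw [smul_eq_zero]
    by_contra hne
    exact h β (joins_of_edgeForm_single_ne_zero (not_or.mp hne).1)

lemma coord_inl_comp_ad (hG : IsGraphAlgebra src tgt B) (hloop : ∀ a, src a ≠ tgt a)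
    (hsimple : ∀ a b : A, Joins src tgt a (src b) (tgt b) → a = b) (i m : V) :
    B.coord (inl m) ∘ₗ LieAlgebra.ad k N (B (inl i)) = 0 := by
  refine B.ext fun r => ?_
  rcases r with l | b
  · simp [hG.lie_inl_inl hloop hsimple]
  · rw [LinearMap.comp_apply, LieAlgebra.ad_apply, ← lie_skew, hG.lie_inr]
    simp

lemma coord_inr_comp_ad (hG : IsGraphAlgebra src tgt B) (hloop : ∀ a, src a ≠ tgt a)
    (hsimple : ∀ a b : A, Joins src tgt a (src b) (tgt b) → a = b) (i : V) (β : A) :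
    B.coord (inr β) ∘ₗ LieAlgebra.ad k N (B (inl i))
      = edgeForm src tgt β (Pi.single i (1 : k)) (fun l => B.coord (inl l)) := by
  classical
  refine B.ext fun r => ?_
  rw [edgeForm_apply]
  rcases r with l | b
  · have hl : (fun l' => B.coord (inl l') (B (inl l))) = Pi.single l (1 : k) := by
      funext l'
      simp [Finsupp.single_apply, Pi.single_apply, @eq_comm _ l]
    rw [hl]
    simp [hG.lie_inl_inl hloop hsimple, Finsupp.single_apply]
  · rw [LinearMap.comp_apply, LieAlgebra.ad_apply, ← lie_skew, hG.lie_inr]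
    simp [edgeForm]

lemma tcoeff_tAct_inr_inl (hG : IsGraphAlgebra src tgt B) (hloop : ∀ a, src a ≠ tgt a)
    (hsimple : ∀ a b : A, Joins src tgt a (src b) (tgt b) → a = b) (i : V) (β : A) (m : V)
    (ω : N ⊗[k] N) :
    tcoeff B (inr β) (inl m) (tAct k N (B (inl i)) ω)
      = edgeForm src tgt β (Pi.single i (1 : k)) (fun l => tcoeff B (inl l) (inl m) ω) := by
  simp [tcoeff_eq_dualDistrib, dualDistrib_tAct, hG.coord_inr_comp_ad hloop hsimple,
    hG.coord_inl_comp_ad hloop hsimple, edgeForm, TensorProduct.sub_tmul,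
    ← TensorProduct.smul_tmul']

lemma tcoeff_tAct_inr_inr (hG : IsGraphAlgebra src tgt B) (hloop : ∀ a, src a ≠ tgt a)
    (hsimple : ∀ a b : A, Joins src tgt a (src b) (tgt b) → a = b) (i : V) (β b : A)
    (ω : N ⊗[k] N) :
    tcoeff B (inr β) (inr b) (tAct k N (B (inl i)) ω)
      = edgeForm src tgt β (Pi.single i (1 : k)) (fun l => tcoeff B (inl l) (inr b) ω)
        + edgeForm src tgt b (Pi.single i (1 : k)) (fun l => tcoeff B (inr β) (inl l) ω) := by
  simp [tcoeff_eq_dualDistrib, dualDistrib_tAct, hG.coord_inr_comp_ad hloop hsimple, edgeForm,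
    TensorProduct.sub_tmul, TensorProduct.tmul_sub, ← TensorProduct.smul_tmul',
    TensorProduct.tmul_smul]

lemma lie_mem_span_inr (hG : IsGraphAlgebra src tgt B) (hloop : ∀ a, src a ≠ tgt a)
    (hsimple : ∀ a b : A, Joins src tgt a (src b) (tgt b) → a = b) (i j : V) :
    ⁅B (inl i), B (inl j)⁆ ∈ 𝔷 := by
  rw [hG.lie_inl_inl hloop hsimple]
  exact Submodule.sum_mem _ fun β _ => Submodule.smul_mem _ _ (Submodule.subset_span ⟨β, rfl⟩)

theorem mem_tsub_of_tAct_eq_zero [Fintype V] [NeZero (2 : k)] (hG : IsGraphAlgebra src tgt B)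
    (hloop : ∀ a, src a ≠ tgt a) (hsimple : ∀ a b : A, Joins src tgt a (src b) (tgt b) → a = b)
    (hdeg : ∀ e : V, 2 ≤ deg src tgt e) {ω : N ⊗[k] N} (hω : TensorProduct.comm k N N ω = -ω)
    (hinv : ∀ i, tAct k N (B (inl i)) ω = 0) : ω ∈ tsub k N 𝔷 𝔷 := by
  have hanti : ∀ p q, tcoeff B q p ω = -tcoeff B p q ω := fun p q => by
    rw [← tcoeff_comm, hω, map_neg]
  have hWW : ∀ l m, tcoeff B (inl l) (inl m) ω = 0 := fun l m =>
    congrFun (eq_zero_of_edgeForm_single_eq_zero hloop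
      (fun l => (exists_pair_incident (hdeg l)).imp fun _ ⟨_, h, _⟩ => h)
      fun i β => by rw [← hG.tcoeff_tAct_inr_inl hloop hsimple, hinv, map_zero]) l
  have hWZ : ∀ l b, tcoeff B (inl l) (inr b) ω = 0 :=
    eq_zero_of_edgeForm_single_symm hloop hsimple hdeg fun i β b => by
      have h := hG.tcoeff_tAct_inr_inr hloop hsimple i β b ω
      have hZW : ∀ l, tcoeff B (inr β) (inl l) ω = -tcoeff B (inl l) (inr β) ω :=
        fun l => hanti _ _
      simp only [hinv, map_zero, hZW, edgeForm, smul_eq_mul] at h ⊢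
      linear_combination -h
  refine mem_of_tcoeff_ne_zero B fun p q h => ?_
  rcases p with l | β <;> rcases q with m | b
  · exact absurd (hWW l m) h
  · exact absurd (hWZ l b) h
  · exact absurd (by rw [hanti, hWZ, neg_zero]) h
  · exact tmul_mem_tsub (Submodule.subset_span ⟨β, rfl⟩) (Submodule.subset_span ⟨b, rfl⟩)

theorem map_mem_tsub_of_mem_span_inr [Fintype V] [NeZero (2 : k)] (hG : IsGraphAlgebra src tgt B)
    (hloop : ∀ a, src a ≠ tgt a) (hsimple : ∀ a b : A, Joins src tgt a (src b) (tgt b) → a = b)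
    (hdeg : ∀ e : V, 2 ≤ deg src tgt e) {δ : N →ₗ[k] N ⊗[k] N}
    (hanti : ∀ x, TensorProduct.comm k N N (δ x) = -δ x)
    (hcoc : ∀ x y, δ ⁅x, y⁆ = tAct k N x (δ y) - tAct k N y (δ x)) {z : N} (hz : z ∈ 𝔷) :
    δ z ∈ tsub k N 𝔷 𝔷 := by
  refine hG.mem_tsub_of_tAct_eq_zero hloop hsimple hdeg (hanti z) fun i => ?_
  have h : tAct k N z = 0 := by simp [tAct, hG.ad_eq_zero_of_mem hz]
  simpa [hG.lie_eq_zero_of_mem _ hz, h] using (hcoc (B (inl i)) z).symm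

lemma tcoeff_inl_inl_map_inl_eq_zero [Fintype V] [NeZero (2 : k)] (hG : IsGraphAlgebra src tgt B)
    (hloop : ∀ a, src a ≠ tgt a) (hsimple : ∀ a b : A, Joins src tgt a (src b) (tgt b) → a = b)
    (hdeg : ∀ e : V, 2 ≤ deg src tgt e) {δ : N →ₗ[k] N ⊗[k] N}
    (hanti : ∀ x, TensorProduct.comm k N N (δ x) = -δ x)
    (hcoc : ∀ x y, δ ⁅x, y⁆ = tAct k N x (δ y) - tAct k N y (δ x)) (j l m : V) :
    tcoeff B (inl l) (inl m) (δ (B (inl j))) = 0 := by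
  set P : V → V → V → k := fun j l m => tcoeff B (inl l) (inl m) (δ (B (inl j))) with hP
  have hrel : ∀ m i j β, edgeForm src tgt β (Pi.single i (1 : k)) (fun l => P j l m)
      = edgeForm src tgt β (Pi.single j (1 : k)) (fun l => P i l m) := by
    intro m i j β
    have h := tcoeff_eq_zero_of_mem_tsub B (span_inr_le_ker_coord m) (inr β)
      (hG.map_mem_tsub_of_mem_span_inr hloop hsimple hdeg hanti hcoc
        (hG.lie_mem_span_inr hloop hsimple i j))
    rwa [hcoc, map_sub, hG.tcoeff_tAct_inr_inl hloop hsimple,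
      hG.tcoeff_tAct_inr_inl hloop hsimple, sub_eq_zero] at h
  have hoff : ∀ m j l, l ≠ j → P j l m = 0 := fun m j l hlj =>
    apply_eq_zero_of_edgeForm_single_comm hloop hsimple hdeg (φ := fun j l => P j l m)
      (hrel m) hlj
  have hskew : ∀ j l m, P j m l = -P j l m := fun j l m => by
    simp only [hP]
    rw [← tcoeff_comm, hanti, map_neg]
  show P j l m = 0
  rcases eq_or_ne l j with rfl | hlj
  · rcases eq_or_ne m l with rfl | hml
    · have h2 : 2 * P m m m = 0 := by linear_combination hskew m m m
      exact (mul_eq_zero.mp h2).resolve_left two_ne_zero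
    · rw [hskew, hoff l l m hml, neg_zero]
  · exact hoff m j l hlj

theorem map_mem_of_mem_span_inl [Fintype V] [NeZero (2 : k)] (hG : IsGraphAlgebra src tgt B)
    (hloop : ∀ a, src a ≠ tgt a) (hsimple : ∀ a b : A, Joins src tgt a (src b) (tgt b) → a = b)
    (hdeg : ∀ e : V, 2 ≤ deg src tgt e) {δ : N →ₗ[k] N ⊗[k] N}
    (hanti : ∀ x, TensorProduct.comm k N N (δ x) = -δ x)
    (hcoc : ∀ x y, δ ⁅x, y⁆ = tAct k N x (δ y) - tAct k N y (δ x)) {w : N} (hw : w ∈ 𝔴) :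
    δ w ∈ tsub k N 𝔴 𝔷 ⊔ tsub k N 𝔷 𝔴 ⊔ tsub k N 𝔷 𝔷 := by
  suffices hle : 𝔴 ≤ (tsub k N 𝔴 𝔷 ⊔ tsub k N 𝔷 𝔴 ⊔ tsub k N 𝔷 𝔷).comap δ from hle hw
  exact Submodule.span_le.mpr (Set.range_subset_iff.mpr fun j => mem_sup_tsub_of_tcoeff_inl_inl
    fun l m => hG.tcoeff_inl_inl_map_inl_eq_zero hloop hsimple hdeg hanti hcoc j l m)

end IsGraphAlgebra

theorem stmt13_general (k V A N : Type*) [Field k] [CharZero k]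
    [Fintype V] [Fintype A] [DecidableEq V]
    [LieRing N] [LieAlgebra k N]
    (src tgt : A → V)
    (hloop : ∀ a, src a ≠ tgt a)
    (hsimple : ∀ a b : A,
      (src a = src b ∧ tgt a = tgt b) ∨ (src a = tgt b ∧ tgt a = src b) → a = b)
    (B : Module.Basis (V ⊕ A) k N)
    (hbz : ∀ (a : A) (x : N), ⁅B (Sum.inr a), x⁆ = 0)
    (hbe : ∀ a : A, ⁅B (Sum.inl (src a)), B (Sum.inl (tgt a))⁆ = B (Sum.inr a))
    (hbe0 : ∀ i j : V,
      (∀ a : A, ¬((src a = i ∧ tgt a = j) ∨ (src a = j ∧ tgt a = i))) →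
      ⁅B (Sum.inl i), B (Sum.inl j)⁆ = 0)
    (hdeg : ∀ e : V, 2 ≤ deg src tgt e) :
    -- (i) (Λ²n)^n = Λ²z:
    (∀ ω : N ⊗[k] N, TensorProduct.comm k N N ω = -ω →
      ((∀ x : N, tAct k N x ω = 0) ↔
        ω ∈ tsub k N (Submodule.span k (Set.range fun a : A => B (Sum.inr a)))
              (Submodule.span k (Set.range fun a : A => B (Sum.inr a)))))
    -- (ii) n is of TST type:
    ∧ (∀ T : A → ((V → k) →ₗ[k] Module.Dual k (V → k)),
        (∀ (a : A) (v w : V → k),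
          T a v w = v (src a) * w (tgt a) - v (tgt a) * w (src a)) →
        ∀ S : Module.Dual k (V → k) →ₗ[k] (V → k),
        (∀ f h : Module.Dual k (V → k), f (S h) = - h (S f)) →
        (∀ a b : A, (T a).comp (S.comp (T b)) + (T b).comp (S.comp (T a)) = 0) →
        S = 0)
    -- (iii) every Lie bialgebra structure δ on n has δ(z) ⊆ Λ²z and δ(W) ⊆ W∧z ⊕ Λ²z:
    ∧ (∀ δ : N →ₗ[k] N ⊗[k] N,
        (∀ x, TensorProduct.comm k N N (δ x) = - δ x) →
        (∀ x, (TensorProduct.map δ LinearMap.id) (δ x)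
          + tCyc k N ((TensorProduct.map δ LinearMap.id) (δ x))
          + tCyc k N (tCyc k N ((TensorProduct.map δ LinearMap.id) (δ x))) = 0) →
        (∀ x y, δ ⁅x, y⁆ = tAct k N x (δ y) - tAct k N y (δ x)) →
        (∀ z ∈ Submodule.span k (Set.range fun a : A => B (Sum.inr a)),
          δ z ∈ tsub k N (Submodule.span k (Set.range fun a : A => B (Sum.inr a)))
                  (Submodule.span k (Set.range fun a : A => B (Sum.inr a))))
        ∧ (∀ w ∈ Submodule.span k (Set.range fun i : V => B (Sum.inl i)),
            δ w ∈ tsub k N (Submodule.span k (Set.range fun i : V => B (Sum.inl i)))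
                    (Submodule.span k (Set.range fun a : A => B (Sum.inr a)))
                ⊔ tsub k N (Submodule.span k (Set.range fun a : A => B (Sum.inr a)))
                    (Submodule.span k (Set.range fun i : V => B (Sum.inl i)))
                ⊔ tsub k N (Submodule.span k (Set.range fun a : A => B (Sum.inr a)))
                    (Submodule.span k (Set.range fun a : A => B (Sum.inr a))))) := by
  have hG : IsGraphAlgebra src tgt B := ⟨hbz, hbe, hbe0⟩
  refine ⟨fun ω hω => ⟨fun h => ?_, fun h x => hG.tAct_eq_zero_of_mem_tsub x h⟩,
    fun T hT S _ hTST => eq_zero_of_tst hloop hsimple hdeg T hT S hTST,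
    fun δ hanti _ hcoc => ⟨fun z hz => ?_, fun w hw => ?_⟩⟩
  · exact hG.mem_tsub_of_tAct_eq_zero hloop hsimple hdeg hω fun i => h _
  · exact hG.map_mem_tsub_of_mem_span_inr hloop hsimple hdeg hanti hcoc hz
  · exact hG.map_mem_of_mem_span_inl hloop hsimple hdeg hanti hcoc hw

/-- for the graph algebra `n = n(G) = W ⊕ z` of a finite simple graph in
which every vertex has degree at least 2: (i) `(Λ²n)^n = Λ²z`; (ii) `n` is of TST type
(the only antisymmetric `S : W* → W` with `T_α S T_β + T_β S T_α = 0` for all edges is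
`S = 0`, where `W = V → k` in the vertex basis and `T_α(v)(w) = v_{src α} w_{tgt α} −
v_{tgt α} w_{src α}`); and (iii) every Lie bialgebra structure `δ` on `n` satisfies
`δ(z) ⊆ Λ²z` and `δ(W) ⊆ W∧z ⊕ Λ²z`. -/
theorem stmt13 (k V A N : Type*) [Field k] [CharZero k]
    [Fintype V] [Fintype A] [DecidableEq V] [DecidableEq A]
    [LieRing N] [LieAlgebra k N]
    (src tgt : A → V)
    (hloop : ∀ a, src a ≠ tgt a)
    (hsimple : ∀ a b : A,
      (src a = src b ∧ tgt a = tgt b) ∨ (src a = tgt b ∧ tgt a = src b) → a = b)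
    (B : Module.Basis (V ⊕ A) k N)
    (hbz : ∀ (a : A) (x : N), ⁅B (Sum.inr a), x⁆ = 0)
    (hbe : ∀ a : A, ⁅B (Sum.inl (src a)), B (Sum.inl (tgt a))⁆ = B (Sum.inr a))
    (hbe0 : ∀ i j : V,
      (∀ a : A, ¬((src a = i ∧ tgt a = j) ∨ (src a = j ∧ tgt a = i))) →
      ⁅B (Sum.inl i), B (Sum.inl j)⁆ = 0)
    (hdeg : ∀ e : V, 2 ≤ deg src tgt e) :
    -- (i) (Λ²n)^n = Λ²z:
    (∀ ω : N ⊗[k] N, TensorProduct.comm k N N ω = -ω →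
      ((∀ x : N, tAct k N x ω = 0) ↔
        ω ∈ tsub k N (Submodule.span k (Set.range fun a : A => B (Sum.inr a)))
              (Submodule.span k (Set.range fun a : A => B (Sum.inr a)))))
    -- (ii) n is of TST type:
    ∧ (∀ T : A → ((V → k) →ₗ[k] Module.Dual k (V → k)),
        (∀ (a : A) (v w : V → k),
          T a v w = v (src a) * w (tgt a) - v (tgt a) * w (src a)) →
        ∀ S : Module.Dual k (V → k) →ₗ[k] (V → k),
        (∀ f h : Module.Dual k (V → k), f (S h) = - h (S f)) →
        (∀ a b : A, (T a).comp (S.comp (T b)) + (T b).comp (S.comp (T a)) = 0) →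
        S = 0)
    -- (iii) every Lie bialgebra structure δ on n has δ(z) ⊆ Λ²z and δ(W) ⊆ W∧z ⊕ Λ²z:
    ∧ (∀ δ : N →ₗ[k] N ⊗[k] N,
        (∀ x, TensorProduct.comm k N N (δ x) = - δ x) →
        (∀ x, (TensorProduct.map δ LinearMap.id) (δ x)
          + tCyc k N ((TensorProduct.map δ LinearMap.id) (δ x))
          + tCyc k N (tCyc k N ((TensorProduct.map δ LinearMap.id) (δ x))) = 0) →
        (∀ x y, δ ⁅x, y⁆ = tAct k N x (δ y) - tAct k N y (δ x)) →
        (∀ z ∈ Submodule.span k (Set.range fun a : A => B (Sum.inr a)),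
          δ z ∈ tsub k N (Submodule.span k (Set.range fun a : A => B (Sum.inr a)))
                  (Submodule.span k (Set.range fun a : A => B (Sum.inr a))))
        ∧ (∀ w ∈ Submodule.span k (Set.range fun i : V => B (Sum.inl i)),
            δ w ∈ tsub k N (Submodule.span k (Set.range fun i : V => B (Sum.inl i)))
                    (Submodule.span k (Set.range fun a : A => B (Sum.inr a)))
                ⊔ tsub k N (Submodule.span k (Set.range fun a : A => B (Sum.inr a)))
                    (Submodule.span k (Set.range fun i : V => B (Sum.inl i)))
                ⊔ tsub k N (Submodule.span k (Set.range fun a : A => B (Sum.inr a)))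
                    (Submodule.span k (Set.range fun a : A => B (Sum.inr a))))) :=
  stmt13_general k V A N src tgt hloop hsimple B hbz hbe hbe0 hdeg
end
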